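/- Let (X, σ) be a classifying support data for a triangulated category T, let W be an irreducible closed subset of X, and suppose g_σ(W) equals the smallest thick subcategory containing 𝒳₁ ∪ 𝒳₂ for principal thick subcategories 𝒳₁, 𝒳₂. Then 𝒳₁ = g_σ(W) or 𝒳₂ = g_σ(W); that is, g_σ(W) is an irreducible thick subcategory. -/

import Mathlib

universe v u

open CategoryTheory Limits Pretriangulated

variable (C : Type u) [Category.{v} C] [Preadditive C] [HasZeroObject C]
  [HasBinaryBiproducts C] [HasShift C ℤ]
  [∀ n : ℤ, (CategoryTheory.shiftFunctor C n).Additive] [Pretriangulated C]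

/-- A thick subcategory of a triangulated category: a nonempty (contains the zero
objects) full additive subcategory, closed under isomorphisms, shifts, extensions
and direct summands, recorded via its set of objects. -/
structure ThickSubcat where
  set : Set C
  zero_mem : ∀ M : C, IsZero M → M ∈ set
  iso_mem : ∀ {M N : C}, (M ≅ N) → M ∈ set → N ∈ set
  shift_mem : ∀ (M : C) (n : ℤ), M ∈ set → (shiftFunctor C n).obj M ∈ set
  ext_mem : ∀ T : Triangle C, (T ∈ distTriang C) → T.obj₁ ∈ set → T.obj₃ ∈ set →
    T.obj₂ ∈ set
  summand_mem : ∀ M N : C, (M ⊞ N) ∈ set → M ∈ set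

/-- A support data `(X, σ)` for a triangulated category `C`: `σ` assigns to each
object a closed subset of `X` such that `σ(0) = ∅`, `σ(ΣⁿM) = σ(M)`,
`σ(M ⊕ N) = σ(M) ∪ σ(N)`, and `σ(M) ⊆ σ(L) ∪ σ(N)` for each distinguished
triangle `L → M → N → ΣL`. -/
structure SupportData (X : Type*) [TopologicalSpace X] where
  σ : C → Set X
  isClosed_σ : ∀ M : C, IsClosed (σ M)
  σ_zero : ∀ M : C, IsZero M → σ M = ∅
  σ_shift : ∀ (M : C) (n : ℤ), σ ((shiftFunctor C n).obj M) = σ M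
  σ_sum : ∀ M N : C, σ (M ⊞ N) = σ M ∪ σ N
  σ_triangle : ∀ T : Triangle C, (T ∈ distTriang C) → σ T.obj₂ ⊆ σ T.obj₁ ∪ σ T.obj₃

variable {C}

/-- `f_σ(𝒳) = ⋃_{M ∈ 𝒳} σ(M)`. -/
def SupportData.f {X : Type*} [TopologicalSpace X] (sd : SupportData C X)
    (S : Set C) : Set X := ⋃ M ∈ S, sd.σ M

/-- `g_σ(W) = {M : σ(M) ⊆ W}`. -/
def SupportData.g {X : Type*} [TopologicalSpace X] (sd : SupportData C X)
    (W : Set X) : Set C := {M : C | sd.σ M ⊆ W}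

/-- A subset of a topological space is specialization-closed if it contains the
closure of each of its points. -/
def SpclClosed {X : Type*} [TopologicalSpace X] (W : Set X) : Prop :=
  ∀ x ∈ W, closure {x} ⊆ W

variable (C)

/-- The smallest thick subcategory (as a set of objects) containing a given set. -/
def thickClosure (S : Set C) : Set C :=
  ⋂₀ {U : Set C | (∃ T : ThickSubcat C, T.set = U) ∧ S ⊆ U}

variable {C}

/-! A principal thick subcategory `thick(M)` has `f_σ`-image `σ(M)`, since `thick(S) ⊆ g_σ(f_σ S)`
for every `S`. Hence `W = f_σ(g_σ W) = σ(M₁) ∪ σ(M₂)`, a union of two closed sets, so by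
irreducibility `W = σ(Mᵢ) = f_σ(𝒳ᵢ)` for some `i`, and applying `g_σ` gives `𝒳ᵢ = g_σ(W)`. -/

lemma subset_thickClosure (S : Set C) : S ⊆ thickClosure C S :=
  fun _ hM _ hU => hU.2 hM

lemma thickClosure_subset {S : Set C} (T : ThickSubcat C) (h : S ⊆ T.set) :
    thickClosure C S ⊆ T.set :=
  Set.sInter_subset_of_mem ⟨⟨T, rfl⟩, h⟩

lemma IsClosed.spclClosed {X : Type*} [TopologicalSpace X] {W : Set X} (hW : IsClosed W) :
    SpclClosed W :=
  fun _ hx => hW.mem_iff_closure_subset.1 hx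

namespace SupportData

variable {X : Type*} [TopologicalSpace X] (sd : SupportData C X)

open ZeroObject in
lemma σ_subset_of_iso {M N : C} (e : M ≅ N) : sd.σ N ⊆ sd.σ M := by
  -- `M → N → 0 → M⟦1⟧` is distinguished, being isomorphic to the contractible triangle on `M`.
  have hdist : Triangle.mk e.hom (0 : N ⟶ 0) (0 : 0 ⟶ M⟦(1 : ℤ)⟧) ∈ distTriang C :=
    isomorphic_distinguished _ (contractible_distinguished M) _ <|
      Triangle.isoMk _ _ (Iso.refl M) e.symm (Iso.refl 0)
        (e.hom_inv_id.trans (Category.comp_id _).symm)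
        ((isZero_zero C).eq_of_tgt _ _) ((isZero_zero C).eq_of_src _ _)
  simpa [sd.σ_zero 0 (isZero_zero C)] using sd.σ_triangle _ hdist

def gThickSubcat (V : Set X) : ThickSubcat C where
  set := sd.g V
  zero_mem M hM := by simp [SupportData.g, sd.σ_zero M hM]
  iso_mem e hM := (sd.σ_subset_of_iso e).trans hM
  shift_mem M n hM := by simpa [SupportData.g, sd.σ_shift] using hM
  ext_mem T hT h₁ h₃ := (sd.σ_triangle T hT).trans (Set.union_subset h₁ h₃)
  summand_mem M N h :=
    (Set.union_subset_iff.1 (show sd.σ M ∪ sd.σ N ⊆ V from sd.σ_sum M N ▸ h)).1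

lemma σ_subset_f {S : Set C} {M : C} (hM : M ∈ S) : sd.σ M ⊆ sd.f S :=
  Set.subset_biUnion_of_mem (u := sd.σ) hM

lemma f_mono : Monotone sd.f :=
  fun _ _ h => Set.biUnion_subset_biUnion_left h

lemma f_g_subset (V : Set X) : sd.f (sd.g V) ⊆ V :=
  Set.iUnion₂_subset fun _ hM => hM

lemma f_union (S S' : Set C) : sd.f (S ∪ S') = sd.f S ∪ sd.f S' :=
  Set.biUnion_union S S' sd.σ

lemma f_singleton (M : C) : sd.f {M} = sd.σ M :=
  Set.biUnion_singleton M sd.σ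

lemma f_thickClosure (S : Set C) : sd.f (thickClosure C S) = sd.f S := by
  have hle : thickClosure C S ⊆ sd.g (sd.f S) :=
    thickClosure_subset (sd.gThickSubcat (sd.f S)) fun _ hM => sd.σ_subset_f hM
  exact ((sd.f_mono hle).trans (sd.f_g_subset _)).antisymm (sd.f_mono (subset_thickClosure S))

end SupportData

theorem stmt5_general {X : Type*} [TopologicalSpace X] (sd : SupportData C X)
    (h1 : ∀ T : ThickSubcat C, sd.g (sd.f T.set) = T.set)
    (h2 : ∀ W : Set X, SpclClosed W → sd.f (sd.g W) = W)
    (W : Set X) (hWc : IsClosed W) (hWi : IsIrreducible W)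
    (T₁ T₂ : ThickSubcat C) (M₁ M₂ : C)
    (hp₁ : T₁.set = thickClosure C {M₁}) (hp₂ : T₂.set = thickClosure C {M₂})
    (hg : sd.g W = thickClosure C (T₁.set ∪ T₂.set)) :
    T₁.set = sd.g W ∨ T₂.set = sd.g W := by
  have hf₁ : sd.f T₁.set = sd.σ M₁ := by rw [hp₁, sd.f_thickClosure, sd.f_singleton]
  have hf₂ : sd.f T₂.set = sd.σ M₂ := by rw [hp₂, sd.f_thickClosure, sd.f_singleton]
  have hW : W = sd.f T₁.set ∪ sd.f T₂.set := by
    rw [← h2 W hWc.spclClosed, hg, sd.f_thickClosure, sd.f_union]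
  have eq_g_of_subset : ∀ T : ThickSubcat C, sd.f T.set ⊆ W → W ⊆ sd.f T.set → T.set = sd.g W :=
    fun T hTW hWT => (h1 T).symm.trans (congrArg sd.g (hTW.antisymm hWT))
  rcases isPreirreducible_iff_isClosed_union_isClosed.1 hWi.isPreirreducible _ _
      (hf₁ ▸ sd.isClosed_σ M₁) (hf₂ ▸ sd.isClosed_σ M₂) hW.subset with h | h
  · exact .inl (eq_g_of_subset T₁ (hW ▸ Set.subset_union_left) h)
  · exact .inr (eq_g_of_subset T₂ (hW ▸ Set.subset_union_right) h)

/-- For a classifying support data and an irreducible closed subset `W`, if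
`g_σ(W)` is the thick closure of the union of two principal thick subcategories,
then one of them equals `g_σ(W)`: i.e. `g_σ(W)` is an irreducible thick
subcategory. -/
theorem stmt5 {X : Type*} [TopologicalSpace X] [TopologicalSpace.NoetherianSpace X]
    [QuasiSober X] [T0Space X] (sd : SupportData C X)
    (h1 : ∀ T : ThickSubcat C, sd.g (sd.f T.set) = T.set)
    (h2 : ∀ W : Set X, SpclClosed W → sd.f (sd.g W) = W)
    (W : Set X) (hWc : IsClosed W) (hWi : IsIrreducible W)
    (T₁ T₂ : ThickSubcat C) (M₁ M₂ : C)
    (hp₁ : T₁.set = thickClosure C {M₁}) (hp₂ : T₂.set = thickClosure C {M₂})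
    (hg : sd.g W = thickClosure C (T₁.set ∪ T₂.set)) :
    T₁.set = sd.g W ∨ T₂.set = sd.g W :=
  stmt5_general sd h1 h2 W hWc hWi T₁ T₂ M₁ M₂ hp₁ hp₂ hg
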